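/- The maximum over x ∈ [1/2, 1] of the function f(x) = 5/d - 1 + (2(d-1)/d)·x + ((d-2)/d)·(1/x) + (2√(d-1)/d)·√(-2x² + 3x - 1)/x equals 2 + 2/d, whenever d ≥ 9, and the maximum is attained at x* = 3/4 ± (1/4)·√((d-9)/(d-1)). -/
import Mathlib


open Real Set

/-- The objective of the conditional Lovász theta maximization for one 5-cycle. -/
noncomputable def thetaObj (d x : ℝ) : ℝ :=
  5 / d - 1 + (2 * (d - 1) / d) * x + ((d - 2) / d) * (1 / x) +
    (2 * Real.sqrt (d - 1) / d) * Real.sqrt (-2 * x ^ 2 + 3 * x - 1) / x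

lemma theta_key (d x : ℝ) (hd : 9 ≤ d) (hx : x ∈ Icc (1/2 : ℝ) 1) :
    thetaObj d x = 2 + 2 / d -
      (Real.sqrt (d - 1) * Real.sqrt (-2 * x ^ 2 + 3 * x - 1) - 1) ^ 2 / (d * x) := by
  obtain ⟨hx1, hx2⟩ := hx
  have hx0 : 0 < x := by linarith
  have hd0 : 0 < d := by linarith
  have hg : 0 ≤ -2 * x ^ 2 + 3 * x - 1 := by nlinarith
  have h1 : Real.sqrt (-2 * x ^ 2 + 3 * x - 1) ^ 2 = -2 * x ^ 2 + 3 * x - 1 :=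
    Real.sq_sqrt hg
  have h2 : Real.sqrt (d - 1) ^ 2 = d - 1 := Real.sq_sqrt (by linarith)
  unfold thetaObj
  have hsq : (Real.sqrt (d - 1) * Real.sqrt (-2 * x ^ 2 + 3 * x - 1) - 1) ^ 2
      = (d - 1) * (-2 * x ^ 2 + 3 * x - 1)
        - 2 * (Real.sqrt (d - 1) * Real.sqrt (-2 * x ^ 2 + 3 * x - 1)) + 1 := by
    have : (Real.sqrt (d - 1) * Real.sqrt (-2 * x ^ 2 + 3 * x - 1) - 1) ^ 2
        = Real.sqrt (d - 1) ^ 2 * Real.sqrt (-2 * x ^ 2 + 3 * x - 1) ^ 2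
          - 2 * (Real.sqrt (d - 1) * Real.sqrt (-2 * x ^ 2 + 3 * x - 1)) + 1 := by ring
    rw [this, h1, h2]
  rw [hsq]
  field_simp
  ring

lemma theta_le (d x : ℝ) (hd : 9 ≤ d) (hx : x ∈ Icc (1/2 : ℝ) 1) :
    thetaObj d x ≤ 2 + 2 / d := by
  rw [theta_key d x hd hx]
  have hx0 : 0 < x := lt_of_lt_of_le (by norm_num) hx.1
  have hd0 : 0 < d := by linarith
  have : 0 ≤ (Real.sqrt (d - 1) * Real.sqrt (-2 * x ^ 2 + 3 * x - 1) - 1) ^ 2 / (d * x) :=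
    div_nonneg (sq_nonneg _) (by positivity)
  linarith

lemma g_val (d : ℝ) (hd : 9 ≤ d) (ε : ℝ) (hε : ε = 1 ∨ ε = -1) :
    -2 * (3 / 4 + ε * ((1 / 4) * Real.sqrt ((d - 9) / (d - 1)))) ^ 2
      + 3 * (3 / 4 + ε * ((1 / 4) * Real.sqrt ((d - 9) / (d - 1)))) - 1 = 1 / (d - 1) := by
  have hd1 : (0:ℝ) < d - 1 := by linarith
  have hq : (0:ℝ) ≤ (d - 9) / (d - 1) := div_nonneg (by linarith) hd1.le
  have hr : Real.sqrt ((d - 9) / (d - 1)) ^ 2 = (d - 9) / (d - 1) := Real.sq_sqrt hq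
  have he : ε ^ 2 = 1 := by rcases hε with h | h <;> rw [h] <;> norm_num
  have expand : -2 * (3 / 4 + ε * ((1 / 4) * Real.sqrt ((d - 9) / (d - 1)))) ^ 2
      + 3 * (3 / 4 + ε * ((1 / 4) * Real.sqrt ((d - 9) / (d - 1)))) - 1
      = 1 / 8 - (ε ^ 2 * Real.sqrt ((d - 9) / (d - 1)) ^ 2) / 8 := by ring
  rw [expand, he, hr]
  field_simp
  ring

lemma theta_at (d : ℝ) (hd : 9 ≤ d) (ε : ℝ) (hε : ε = 1 ∨ ε = -1)
    (hx : (3 / 4 + ε * ((1 / 4) * Real.sqrt ((d - 9) / (d - 1)))) ∈ Icc (1/2 : ℝ) 1) :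
    thetaObj d (3 / 4 + ε * ((1 / 4) * Real.sqrt ((d - 9) / (d - 1)))) = 2 + 2 / d := by
  set x := 3 / 4 + ε * ((1 / 4) * Real.sqrt ((d - 9) / (d - 1))) with hxdef
  have hd1 : (0:ℝ) < d - 1 := by linarith
  have hgv : -2 * x ^ 2 + 3 * x - 1 = 1 / (d - 1) := g_val d hd ε hε
  rw [theta_key d x hd hx, hgv]
  have : Real.sqrt (d - 1) * Real.sqrt (1 / (d - 1)) = 1 := by
    rw [← Real.sqrt_mul hd1.le]
    rw [mul_one_div, div_self hd1.ne', Real.sqrt_one]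
  rw [this]
  norm_num

lemma r_mem (d : ℝ) (hd : 9 ≤ d) (ε : ℝ) (hε : ε = 1 ∨ ε = -1) :
    (3 / 4 + ε * ((1 / 4) * Real.sqrt ((d - 9) / (d - 1)))) ∈ Icc (1/2 : ℝ) 1 := by
  have hd1 : (0:ℝ) < d - 1 := by linarith
  have h0 : (0:ℝ) ≤ Real.sqrt ((d - 9) / (d - 1)) := Real.sqrt_nonneg _
  have h1 : Real.sqrt ((d - 9) / (d - 1)) ≤ 1 := by
    rw [Real.sqrt_le_one]
    rw [div_le_one hd1]
    linarith
  constructor <;> rcases hε with h | h <;> rw [h] <;> nlinarith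

theorem stmt_7 (d : ℝ) (hd : 9 ≤ d) :
    IsGreatest {y : ℝ | ∃ x ∈ Icc (1/2 : ℝ) 1, y = thetaObj d x} (2 + 2 / d) ∧
    (3 / 4 + (1 / 4) * Real.sqrt ((d - 9) / (d - 1)) ∈ Icc (1/2 : ℝ) 1 ∧
      thetaObj d (3 / 4 + (1 / 4) * Real.sqrt ((d - 9) / (d - 1))) = 2 + 2 / d) ∧
    (3 / 4 - (1 / 4) * Real.sqrt ((d - 9) / (d - 1)) ∈ Icc (1/2 : ℝ) 1 ∧
      thetaObj d (3 / 4 - (1 / 4) * Real.sqrt ((d - 9) / (d - 1))) = 2 + 2 / d) := by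
  have e1 : (3 / 4 + (1 / 4) * Real.sqrt ((d - 9) / (d - 1)))
      = 3 / 4 + (1:ℝ) * ((1 / 4) * Real.sqrt ((d - 9) / (d - 1))) := by ring
  have e2 : (3 / 4 - (1 / 4) * Real.sqrt ((d - 9) / (d - 1)))
      = 3 / 4 + (-1:ℝ) * ((1 / 4) * Real.sqrt ((d - 9) / (d - 1))) := by ring
  have m1 := r_mem d hd 1 (Or.inl rfl)
  have m2 := r_mem d hd (-1) (Or.inr rfl)
  have v1 := theta_at d hd 1 (Or.inl rfl) m1
  have v2 := theta_at d hd (-1) (Or.inr rfl) m2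
  refine ⟨⟨⟨_, e1 ▸ m1, (e1 ▸ v1).symm⟩, ?_⟩, ⟨e1 ▸ m1, e1 ▸ v1⟩, ⟨e2 ▸ m2, e2 ▸ v2⟩⟩
  rintro y ⟨x, hx, rfl⟩
  exact theta_le d x hd hx
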